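/- arXiv:1709.06294 — 2 statements merged into one kernel-verified Lean document; each statement's English description precedes it below -/
import Mathlib

section
/- Let K ≥ 1 and let D_1, …, D_K be mutually independent nonnegative real random variables such that D_t has probability density f_t(r) = 2π λ_t r exp(−π λ_t r²) on r ≥ 0. Then for every tier index k, the probability P( for all t ≠ k, P_k D_k^{−α} > P_t D_t^{−α} ) equals A_k = λ_k P_k^{2/α} / Σ_{t=1}^{K} λ_t P_t^{2/α}. -/
open MeasureTheory ProbabilityTheory Real

/-! If `D` has the Rayleigh law `2πλ r exp(-πλr²) dr`, then `D² / c` is exponential with rate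
`πλc`. Since `P_k D_k^{-α} > P_t D_t^{-α}` iff `D_k² / P_k^{2/α} < D_t² / P_t^{2/α}`, tier `k` wins
exactly when the `k`-th of the independent exponential clocks `D_t² / P_t^{2/α}`, of rates
`π λ_t P_t^{2/α}`, rings first; conditioning on that clock, this happens with probability
`∫ c_k e^{-c_k x} e^{-(∑_{t ≠ k} c_t) x} dx = c_k / ∑_t c_t`. -/

open Set

namespace ProbabilityTheory

section Exponential

lemma expMeasure_eq_withDensity (c : ℝ) :
    expMeasure c = volume.withDensity (exponentialPDF c) :=
  rfl

lemma ae_nonneg_expMeasure (c : ℝ) : ∀ᵐ x ∂expMeasure c, 0 ≤ x := by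
  simp only [ae_iff, not_le]
  rw [Iio_def, expMeasure_eq_withDensity, withDensity_apply _ measurableSet_Iio]
  exact lintegral_exponentialPDF_of_nonpos le_rfl

lemma expMeasure_Ioi {c r : ℝ} (hc : 0 < c) (hr : 0 ≤ r) :
    expMeasure c (Ioi r) = ENNReal.ofReal (exp (-(c * r))) := by
  have := isProbabilityMeasure_expMeasure hc
  have hle : exp (-(c * r)) ≤ 1 := exp_le_one_iff.2 (by nlinarith)
  rw [← compl_Iic, prob_compl_eq_one_sub measurableSet_Iic, ← ofReal_cdf, cdf_expMeasure_eq hc,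
    if_pos hr, ← ENNReal.ofReal_one, ← ENNReal.ofReal_sub _ (by linarith)]
  ring_nf

lemma lintegral_exp_neg_mul_expMeasure {c a : ℝ} (hc : 0 < c) (hca : 0 < c + a) :
    ∫⁻ x, ENNReal.ofReal (exp (-(a * x))) ∂expMeasure c = ENNReal.ofReal (c / (c + a)) := by
  have hdens : ∀ x, exponentialPDF c x * ENNReal.ofReal (exp (-(a * x))) =
      (Ici 0).indicator (fun x => ENNReal.ofReal (c * exp (-(c + a) * x))) x := by
    intro x
    rcases lt_or_ge x 0 with hx | hx
    · simp [exponentialPDF_of_neg hx, hx]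
    · rw [exponentialPDF_of_nonneg hx, indicator_of_mem (mem_Ici.2 hx),
        ← ENNReal.ofReal_mul (by positivity), mul_assoc, ← exp_add]
      ring_nf
  have hpdf : Measurable (exponentialPDF c) := (measurable_exponentialPDFReal c).ennreal_ofReal
  rw [expMeasure_eq_withDensity, lintegral_withDensity_eq_lintegral_mul _ hpdf (by fun_prop)]
  simp only [Pi.mul_apply]
  rw [lintegral_congr hdens, lintegral_indicator measurableSet_Ici,
    setLIntegral_congr Ioi_ae_eq_Ici.symm, ← ofReal_integral_eq_lintegral_ofReal]
  · rw [integral_const_mul, integral_exp_mul_Ioi (by linarith)]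
    congr 1
    field_simp
    simp
  · exact (integrableOn_exp_mul_Ioi (by linarith) 0).const_mul c
  · exact Filter.Eventually.of_forall fun x => by positivity

end Exponential

variable {Ω : Type*} [MeasurableSpace Ω] {μ : Measure Ω}

section Race

variable [IsFiniteMeasure μ] {ι : Type*} [Fintype ι] [DecidableEq ι] {X : ι → Ω → ℝ}

theorem iIndepFun.measure_forall_ne_lt_eq_lintegral (hX : ∀ t, Measurable (X t))
    (hindep : iIndepFun X μ) (k : ι) :
    μ {ω | ∀ t ≠ k, X k ω < X t ω} =
      ∫⁻ r, ∏ t ∈ Finset.univ.erase k, μ {ω | r < X t ω} ∂μ.map (X k) := by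
  set S := Finset.univ.erase k
  set Y : Ω → S → ℝ := fun ω t => X t ω
  have hY : Measurable Y := measurable_pi_lambda _ fun t => hX t
  have hind : IndepFun (X k) Y μ :=
    (hindep.indepFun_finset {k} S (by simp [S]) hX).comp
      (measurable_pi_apply (⟨k, Finset.mem_singleton_self k⟩ : ({k} : Finset ι))) measurable_id
  have hjoint :=
    (indepFun_iff_map_prod_eq_prod_map_map (hX k).aemeasurable hY.aemeasurable).1 hind
  set E : Set (ℝ × (S → ℝ)) := {p | ∀ t, p.1 < p.2 t}
  have hE : MeasurableSet E := by
    simp only [E, ofPred_forall]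
    exact MeasurableSet.iInter fun t => measurableSet_lt (by fun_prop) (by fun_prop)
  have hevent : {ω | ∀ t ≠ k, X k ω < X t ω} = (fun ω => (X k ω, Y ω)) ⁻¹' E := by
    ext ω; simp [E, Y, S]
  rw [hevent, ← Measure.map_apply ((hX k).prodMk hY) hE, hjoint, Measure.prod_apply hE]
  refine lintegral_congr fun r => ?_
  have hslice : Prod.mk r ⁻¹' E = Set.pi univ fun _ => Ioi r := by ext y; simp [E]
  rw [hslice, Measure.map_apply hY (MeasurableSet.univ_pi fun _ => measurableSet_Ioi)]
  have hpre : Y ⁻¹' Set.pi univ (fun _ => Ioi r) = ⋂ t ∈ S, X t ⁻¹' Ioi r := by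
    ext ω; simp [Y, S]
  rw [hpre, hindep.measure_inter_preimage_eq_mul S fun _ _ => measurableSet_Ioi]
  rfl

theorem iIndepFun.measure_forall_ne_lt_of_expMeasure {c : ι → ℝ}
    (hX : ∀ t, Measurable (X t)) (hindep : iIndepFun X μ) (hc : ∀ t, 0 < c t)
    (hlaw : ∀ t, μ.map (X t) = expMeasure (c t)) (k : ι) :
    μ {ω | ∀ t ≠ k, X k ω < X t ω} = ENNReal.ofReal (c k / ∑ t, c t) := by
  have htail : ∀ t, ∀ r, 0 ≤ r → μ {ω | r < X t ω} = ENNReal.ofReal (exp (-(c t * r))) :=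
    fun t r hr => by
      rw [← expMeasure_Ioi (hc t) hr, ← hlaw t, Measure.map_apply (hX t) measurableSet_Ioi]
      rfl
  have hprod : ∀ᵐ r ∂μ.map (X k), ∏ t ∈ Finset.univ.erase k, μ {ω | r < X t ω} =
      ENNReal.ofReal (exp (-((∑ t ∈ Finset.univ.erase k, c t) * r))) := by
    rw [hlaw k]
    filter_upwards [ae_nonneg_expMeasure (c k)] with r hr
    rw [Finset.prod_congr rfl fun t _ => htail t r hr,
      ← ENNReal.ofReal_prod_of_nonneg fun t _ => (exp_pos _).le, ← exp_sum, Finset.sum_mul,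
      Finset.sum_neg_distrib]
  rw [hindep.measure_forall_ne_lt_eq_lintegral hX, lintegral_congr_ae hprod, hlaw k,
    lintegral_exp_neg_mul_expMeasure (hc k), Finset.add_sum_erase _ _ (Finset.mem_univ k)]
  exact add_pos_of_pos_of_nonneg (hc k) (Finset.sum_nonneg fun t _ => (hc t).le)

end Race

section Rayleigh

noncomputable def rayleighMeasure (l : ℝ) : Measure ℝ :=
  volume.withDensity fun r =>
    ENNReal.ofReal (if 0 ≤ r then 2 * π * l * r * exp (-(π * l * r ^ 2)) else 0)

lemma rayleighMeasure_Iic {l a : ℝ} (hl : 0 ≤ l) (ha : 0 ≤ a) :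
    rayleighMeasure l (Iic a) = ENNReal.ofReal (1 - exp (-(π * l * a ^ 2))) := by
  set g : ℝ → ℝ := fun r => 2 * π * l * r * exp (-(π * l * r ^ 2))
  have hderiv : ∀ x, HasDerivAt (fun r => -exp (-(π * l * r ^ 2))) (g x) x := fun x => by
    refine (((hasDerivAt_pow 2 x).const_mul (π * l)).neg.exp.neg).congr_deriv ?_
    simp only [g, Pi.neg_apply]
    ring
  have hg : Continuous g := by fun_prop
  have hint : IntegrableOn ((Ici 0).indicator g) (Iic a) := by
    rw [IntegrableOn, integrable_indicator_iff measurableSet_Ici, IntegrableOn,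
      Measure.restrict_restrict measurableSet_Ici, Ici_inter_Iic]
    exact hg.integrableOn_Icc
  rw [rayleighMeasure, withDensity_apply _ measurableSet_Iic,
    setLIntegral_congr_fun measurableSet_Iic
      (g := fun r => ENNReal.ofReal ((Ici 0).indicator g r))
      fun r _ => by simp [indicator_apply, g],
    ← ofReal_integral_eq_lintegral_ofReal hint, setIntegral_indicator measurableSet_Ici,
    Iic_inter_Ici, integral_Icc_eq_integral_Ioc, ← intervalIntegral.integral_of_le ha,
    intervalIntegral.integral_eq_sub_of_hasDerivAt (fun x _ => hderiv x)
      (hg.intervalIntegrable _ _)]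
  · congr 1
    simp only [ne_eq, OfNat.ofNat_ne_zero, not_false_eq_true, zero_pow, mul_zero, neg_zero,
      exp_zero, sub_neg_eq_add]
    ring
  · exact Filter.Eventually.of_forall <| indicator_nonneg fun r (hr : 0 ≤ r) => by positivity

lemma map_sq_div_eq_expMeasure_of_map_eq_rayleighMeasure [IsFiniteMeasure μ] {D : Ω → ℝ}
    (hD : Measurable D) (hpos : ∀ ω, 0 ≤ D ω) {l c : ℝ} (hl : 0 < l) (hc : 0 < c)
    (hlaw : μ.map D = rayleighMeasure l) :
    μ.map (fun ω => D ω ^ 2 / c) = expMeasure (π * l * c) := by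
  have := isProbabilityMeasure_expMeasure (show 0 < π * l * c by positivity)
  refine Measure.ext_of_Iic _ _ fun y => ?_
  rw [Measure.map_apply (by fun_prop) measurableSet_Iic, ← ofReal_cdf,
    cdf_expMeasure_eq (by positivity)]
  split_ifs with hy
  · have hpre : (fun ω => D ω ^ 2 / c) ⁻¹' Iic y = D ⁻¹' Iic (√(c * y)) := by
      ext ω
      rw [mem_preimage, mem_Iic, div_le_iff₀ hc, mul_comm, mem_preimage, mem_Iic,
        le_sqrt (hpos ω) (by positivity)]
    rw [hpre, ← Measure.map_apply hD measurableSet_Iic, hlaw,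
      rayleighMeasure_Iic hl.le (sqrt_nonneg _), sq_sqrt (by positivity)]
    ring_nf
  · have hpre : (fun ω => D ω ^ 2 / c) ⁻¹' Iic y = ∅ :=
      eq_empty_of_forall_notMem fun ω hω => hy ((div_nonneg (sq_nonneg _) hc.le).trans hω)
    rw [hpre, measure_empty, ENNReal.ofReal_zero]

end Rayleigh

end ProbabilityTheory

lemma mul_rpow_neg_eq_rpow {p a α : ℝ} (hp : 0 < p) (ha : 0 ≤ a) (hα : 0 < α) :
    p * a ^ (-α) = (a ^ 2 / p ^ (2 / α)) ^ (-(α / 2)) := by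
  rw [div_rpow (by positivity) (by positivity), ← rpow_natCast, ← rpow_mul ha,
    ← rpow_mul hp.le]
  have h1 : ((2 : ℕ) : ℝ) * -(α / 2) = -α := by push_cast; ring
  have h2 : 2 / α * -(α / 2) = -1 := by field_simp
  rw [h1, h2, rpow_neg_one, div_inv_eq_mul, mul_comm]

lemma mul_rpow_neg_lt_mul_rpow_neg_iff {p q a b α : ℝ} (hp : 0 < p) (hq : 0 < q) (ha : 0 < a)
    (hb : 0 < b) (hα : 0 < α) :
    p * a ^ (-α) < q * b ^ (-α) ↔ b ^ 2 / q ^ (2 / α) < a ^ 2 / p ^ (2 / α) := by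
  rw [mul_rpow_neg_eq_rpow hp ha.le hα, mul_rpow_neg_eq_rpow hq hb.le hα]
  exact rpow_lt_rpow_iff_of_neg (by positivity) (by positivity) (by linarith)

theorem association_probability_general
    {Ω : Type*} [MeasurableSpace Ω] (μ : Measure Ω) [IsProbabilityMeasure μ]
    (K : ℕ) (lam P : Fin K → ℝ) (α : ℝ)
    (hlam : ∀ t, 0 < lam t) (hP : ∀ t, 0 < P t) (hα : 2 < α)
    (D : Fin K → Ω → ℝ) (hmeas : ∀ t, Measurable (D t))
    (hpos : ∀ t ω, 0 ≤ D t ω)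
    (hindep : iIndepFun D μ)
    (hdens : ∀ t, μ.map (D t) = volume.withDensity (fun r =>
      ENNReal.ofReal (if 0 ≤ r then 2 * π * lam t * r * Real.exp (-(π * lam t * r ^ 2)) else 0)))
    (k : Fin K) :
    μ {ω | ∀ t, t ≠ k → P k * D k ω ^ (-α) > P t * D t ω ^ (-α)} =
      ENNReal.ofReal (lam k * P k ^ (2 / α) / ∑ t, lam t * P t ^ (2 / α)) := by
  have hα0 : 0 < α := by linarith
  set Y : Fin K → Ω → ℝ := fun t ω => D t ω ^ 2 / P t ^ (2 / α)
  have hYlaw : ∀ t, μ.map (Y t) = expMeasure (π * lam t * P t ^ (2 / α)) := fun t =>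
    map_sq_div_eq_expMeasure_of_map_eq_rayleighMeasure (hmeas t) (hpos t) (hlam t)
      (rpow_pos_of_pos (hP t) _) (hdens t)
  have hYindep : iIndepFun Y μ :=
    hindep.comp (fun t x => x ^ 2 / P t ^ (2 / α)) fun t => by fun_prop
  have hDpos : ∀ᵐ ω ∂μ, ∀ t, 0 < D t ω := ae_all_iff.2 fun t => by
    have hne : ∀ᵐ ω ∂μ, D t ω ≠ 0 :=
      ae_of_ae_map (hmeas t).aemeasurable (by rw [hdens t]; exact Measure.ae_ne _ 0)
    filter_upwards [hne] with ω hω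
    exact (hpos t ω).lt_of_ne' hω
  have hevent : {ω | ∀ t, t ≠ k → P k * D k ω ^ (-α) > P t * D t ω ^ (-α)} =ᵐ[μ]
      {ω | ∀ t ≠ k, Y k ω < Y t ω} := by
    filter_upwards [hDpos] with ω hω
    exact propext <| forall_congr' fun t => imp_congr_right fun _ =>
      mul_rpow_neg_lt_mul_rpow_neg_iff (hP t) (hP k) (hω t) (hω k) hα0
  rw [measure_congr hevent, hYindep.measure_forall_ne_lt_of_expMeasure (fun t => by fun_prop)
    (fun t => mul_pos (mul_pos pi_pos (hlam t)) (rpow_pos_of_pos (hP t) _)) hYlaw k]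
  simp_rw [mul_assoc, ← Finset.mul_sum]
  rw [mul_div_mul_left _ _ pi_ne_zero]

/-- Lemma 1 (tier-association probability): if `D_1, …, D_K` are mutually independent
nonnegative random variables, `D_t` having Rayleigh-type density
`f_t(r) = 2π λ_t r exp(−π λ_t r²)` on `r ≥ 0`, then for every tier `k`,
`P(∀ t ≠ k, P_k D_k^{−α} > P_t D_t^{−α}) = λ_k P_k^{2/α} / Σ_t λ_t P_t^{2/α}`. -/
theorem association_probability
    {Ω : Type*} [MeasurableSpace Ω] (μ : Measure Ω) [IsProbabilityMeasure μ]
    (K : ℕ) (hK : 1 ≤ K) (lam P : Fin K → ℝ) (α : ℝ)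
    (hlam : ∀ t, 0 < lam t) (hP : ∀ t, 0 < P t) (hα : 2 < α)
    (D : Fin K → Ω → ℝ) (hmeas : ∀ t, Measurable (D t))
    (hpos : ∀ t ω, 0 ≤ D t ω)
    (hindep : iIndepFun D μ)
    (hdens : ∀ t, μ.map (D t) = volume.withDensity (fun r =>
      ENNReal.ofReal (if 0 ≤ r then 2 * π * lam t * r * Real.exp (-(π * lam t * r ^ 2)) else 0)))
    (k : Fin K) :
    μ {ω | ∀ t, t ≠ k → P k * D k ω ^ (-α) > P t * D t ω ^ (-α)} =
      ENNReal.ofReal (lam k * P k ^ (2 / α) / ∑ t, lam t * P t ^ (2 / α)) :=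
  association_probability_general μ K lam P α hlam hP hα D hmeas hpos hindep hdens k
end

section
/- Consider K ≥ 1 tiers with densities λ_t > 0 and powers P_t > 0, a path-loss exponent α > 2, user power P_U > 0, jammer power P_J > 0 and jammer density λ_J ≥ 0. Set Ξ = Σ_t λ_t P_t^{2/α}, A_k = λ_k P_k^{2/α}/Ξ, sinc(x) = sin(πx)/(πx), and for θ > 0 define J(θ) = ∫_1^∞ u/(u^{α} + θ) du. Then for every tier index k, ∫_0^∞ exp( −[ 2π Ξ θ J(θ) + π( (θ P_U)^{2/α} Σ_t λ_t + (θ P_J)^{2/α} λ_J ) / sinc(2/α) ] · r²/P_k^{2/α} ) · (2π λ_k r / A_k) exp( −π Ξ r² / P_k^{2/α} ) dr = Ξ / ( Ξ (1 + 2 θ J(θ)) + ( (θ P_U)^{2/α} Σ_t λ_t + (θ P_J)^{2/α} λ_J ) / sinc(2/α) ). In particular, this quantity is independent of the tier index k. -/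
/-!
With `p = P_k^{2/α}`, both the interference Laplace transform and the serving-distance density
are Gaussians in `r² / p`, so the integrand is `(2πΞ/p) · r · exp(-(a + πΞ) r² / p)`. Since
`∫₀^∞ r exp(-b r²) dr = 1/(2b)`, the scale `p` cancels and the integral is `πΞ / (a + πΞ)`,
which no longer involves `k`.
-/

open MeasureTheory Real

theorem integral_Ioi_mul_exp_neg_mul_sq {b : ℝ} (hb : 0 < b) :
    ∫ r in Set.Ioi (0 : ℝ), r * exp (-b * r ^ 2) = (2 * b)⁻¹ := by
  apply Complex.ofReal_injective
  rw [← integral_complex_ofReal]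
  push_cast
  exact integral_mul_cexp_neg_mul_sq (by simpa using hb)

theorem integral_exp_mul_serving_distance_density {a Ξ l p : ℝ} (hl : l ≠ 0) (hp : 0 < p)
    (h : 0 < a + π * Ξ) :
    ∫ r in Set.Ioi (0 : ℝ),
        exp (-(a * r ^ 2 / p)) * (2 * π * l * r / (l * p / Ξ)) * exp (-(π * Ξ * r ^ 2 / p)) =
      π * Ξ / (a + π * Ξ) := by
  calc _ = ∫ r in Set.Ioi (0 : ℝ), 2 * π * Ξ / p * (r * exp (-((a + π * Ξ) / p) * r ^ 2)) := by
        congr 1 with r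
        rw [mul_right_comm, ← exp_add, div_div_eq_mul_div]
        field_simp
        ring_nf
    _ = π * Ξ / (a + π * Ξ) := by
        rw [integral_const_mul, integral_Ioi_mul_exp_neg_mul_sq (div_pos h hp)]
        field_simp

theorem sin_div_self_pos {y : ℝ} (hy₀ : 0 < y) (hyπ : y < π) : 0 < sin y / y :=
  div_pos (sin_pos_of_pos_of_lt_pi hy₀ hyπ) hy₀

theorem setIntegral_Ioi_div_rpow_add_nonneg {c : ℝ} (hc : 0 ≤ c) (α : ℝ) {θ : ℝ}
    (hθ : 0 ≤ θ) : 0 ≤ ∫ u in Set.Ioi c, u / (u ^ α + θ) :=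
  setIntegral_nonneg measurableSet_Ioi fun u (hu : c < u) =>
    have hu₀ : 0 < u := hc.trans_lt hu
    have := rpow_pos_of_pos hu₀ α
    by positivity

theorem connection_probability_tier_independent_general
    (K : ℕ) (lam P : Fin K → ℝ) (α PU PJ lamJ θ : ℝ)
    (hlam : ∀ t, 0 < lam t) (hP : ∀ t, 0 < P t) (hα : 2 < α)
    (hPU : 0 < PU) (hPJ : 0 < PJ) (hlamJ : 0 ≤ lamJ) (hθ : 0 < θ)
    (k : Fin K) (Ξ S J : ℝ)
    (hΞ : Ξ = ∑ t, lam t * P t ^ (2 / α))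
    (hS : S = Real.sin (π * (2 / α)) / (π * (2 / α)))
    (hJ : J = ∫ u in Set.Ioi (1 : ℝ), u / (u ^ α + θ)) :
    (∫ r in Set.Ioi (0 : ℝ),
        Real.exp (-((2 * π * Ξ * θ * J +
            π * ((θ * PU) ^ (2 / α) * (∑ t, lam t) + (θ * PJ) ^ (2 / α) * lamJ) / S) *
          r ^ 2 / P k ^ (2 / α))) *
          (2 * π * lam k * r / (lam k * P k ^ (2 / α) / Ξ)) *
          Real.exp (-(π * Ξ * r ^ 2 / P k ^ (2 / α)))) =
      Ξ / (Ξ * (1 + 2 * θ * J) +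
        ((θ * PU) ^ (2 / α) * (∑ t, lam t) + (θ * PJ) ^ (2 / α) * lamJ) / S) := by
  set Q := (θ * PU) ^ (2 / α) * (∑ t, lam t) + (θ * PJ) ^ (2 / α) * lamJ
  have hΞ₀ : 0 < Ξ := hΞ ▸ Finset.sum_pos
    (fun t _ => mul_pos (hlam t) (rpow_pos_of_pos (hP t) _)) ⟨k, Finset.mem_univ k⟩
  have hS₀ : 0 < S := hS ▸ sin_div_self_pos (by positivity)
    (mul_lt_of_lt_one_right pi_pos ((div_lt_one (by linarith)).2 hα))
  have hJ₀ : 0 ≤ J := hJ ▸ setIntegral_Ioi_div_rpow_add_nonneg zero_le_one α hθ.le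
  have hQ₀ : 0 ≤ Q := by
    have := Finset.sum_nonneg fun t (_ : t ∈ Finset.univ) => (hlam t).le
    positivity
  have hdenom : 2 * π * Ξ * θ * J + π * Q / S + π * Ξ = π * (Ξ * (1 + 2 * θ * J) + Q / S) := by
    ring
  rw [integral_exp_mul_serving_distance_density (hlam k).ne' (rpow_pos_of_pos (hP k) _)
    (by positivity), hdenom, mul_div_mul_left _ _ pi_ne_zero]

/-- Corollary 1: with `Ξ = Σ_t λ_t P_t^{2/α}`, `A_k = λ_k P_k^{2/α}/Ξ`,
`S = sinc(2/α) = sin(2π/α)/(2π/α)` and `J(θ) = ∫_1^∞ u/(u^α + θ) du`, the tier-conditional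
connection probability integral
`∫_0^∞ exp(−[2πΞθJ(θ) + π((θP_U)^{2/α} Σ_t λ_t + (θP_J)^{2/α} λ_J)/S] r²/P_k^{2/α})
   · (2πλ_k r/A_k) exp(−πΞ r²/P_k^{2/α}) dr`
equals `Ξ/(Ξ(1 + 2θJ(θ)) + ((θP_U)^{2/α} Σ_t λ_t + (θP_J)^{2/α} λ_J)/S)`,
independently of the tier index `k`. -/
theorem connection_probability_tier_independent
    (K : ℕ) (hK : 1 ≤ K) (lam P : Fin K → ℝ) (α PU PJ lamJ θ : ℝ)
    (hlam : ∀ t, 0 < lam t) (hP : ∀ t, 0 < P t) (hα : 2 < α)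
    (hPU : 0 < PU) (hPJ : 0 < PJ) (hlamJ : 0 ≤ lamJ) (hθ : 0 < θ)
    (k : Fin K) (Ξ S J : ℝ)
    (hΞ : Ξ = ∑ t, lam t * P t ^ (2 / α))
    (hS : S = Real.sin (π * (2 / α)) / (π * (2 / α)))
    (hJ : J = ∫ u in Set.Ioi (1 : ℝ), u / (u ^ α + θ)) :
    (∫ r in Set.Ioi (0 : ℝ),
        Real.exp (-((2 * π * Ξ * θ * J +
            π * ((θ * PU) ^ (2 / α) * (∑ t, lam t) + (θ * PJ) ^ (2 / α) * lamJ) / S) *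
          r ^ 2 / P k ^ (2 / α))) *
          (2 * π * lam k * r / (lam k * P k ^ (2 / α) / Ξ)) *
          Real.exp (-(π * Ξ * r ^ 2 / P k ^ (2 / α)))) =
      Ξ / (Ξ * (1 + 2 * θ * J) +
        ((θ * PU) ^ (2 / α) * (∑ t, lam t) + (θ * PJ) ^ (2 / α) * lamJ) / S) :=
  connection_probability_tier_independent_general K lam P α PU PJ lamJ θ hlam hP hα hPU hPJ hlamJ hθ
    k Ξ S J hΞ hS hJ
end
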